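/- Let R be a 2-torsion free σ-prime ring, U a square closed σ-Lie ideal of R with U ⊄ Z(R), and d a derivation of R. If [d(x), x] ∈ Z(R) for all x ∈ U, then [d(x), x] = 0 for all x ∈ U. -/

import Mathlib

/-!
Write `c = d u * u - u * d u`. Since `x ↦ d x * x - x * d x` is quadratic and `c` is central,
applying the hypothesis to `u * u` and `u + u * u` shows that `4 • (c * u)` is central, hence so is
`c * u` by 2-torsion freeness. Then `c * (u * r - r * u) = 0` for all `r`, and `r = d u` gives
`c * c = 0`. A central element of square zero vanishes in a σ-prime ring: `t = c * σ c` is central,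
σ-fixed and of square zero, so `t R t = 0` forces `t = 0`, and then `c R c = c R σ c = 0` forces `c = 0`.
-/

def IsSigmaPrime {R : Type*} [Ring R] (σ : R → R) : Prop :=
  ∀ a b : R, (∀ r : R, a * r * b = 0) → (∀ r : R, a * r * σ b = 0) → a = 0 ∨ b = 0

section

variable {R : Type*} [Ring R]

theorem mul_comm_of_add_self_mul_comm (htor : ∀ x : R, x + x = 0 → x = 0) {a : R}
    (ha : ∀ r : R, (a + a) * r = r * (a + a)) (r : R) : a * r = r * a := by
  have h : (a * r - r * a) + (a * r - r * a) = 0 := by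
    rw [← sub_eq_zero.mpr (ha r)]; noncomm_ring
  exact sub_eq_zero.mp (htor _ h)

theorem deriv_comm_add_mul_self {d : R → R} (hdadd : ∀ x y : R, d (x + y) = d x + d y)
    (hdmul : ∀ x y : R, d (x * y) = d x * y + x * d y) (u : R) :
    d (u + u * u) * (u + u * u) - (u + u * u) * d (u + u * u) =
      (d u * u - u * d u) + (d (u * u) * (u * u) - u * u * d (u * u)) +
        (((d u * u - u * d u) * u + u * (d u * u - u * d u)) +
          ((d u * u - u * d u) * u + u * (d u * u - u * d u))) := by
  rw [hdadd, hdmul]; noncomm_ring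

theorem deriv_comm_mul_self_eq_zero {d : R → R} (hdadd : ∀ x y : R, d (x + y) = d x + d y)
    (hdmul : ∀ x y : R, d (x * y) = d x * y + x * d y) (htor : ∀ x : R, x + x = 0 → x = 0)
    {u : R} (hc : ∀ r : R, (d u * u - u * d u) * r = r * (d u * u - u * d u))
    (hc₂ : ∀ r : R, (d (u * u) * (u * u) - u * u * d (u * u)) * r =
      r * (d (u * u) * (u * u) - u * u * d (u * u)))
    (hc₃ : ∀ r : R, (d (u + u * u) * (u + u * u) - (u + u * u) * d (u + u * u)) * r =
      r * (d (u + u * u) * (u + u * u) - (u + u * u) * d (u + u * u))) :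
    (d u * u - u * d u) * (d u * u - u * d u) = 0 := by
  set c := d u * u - u * d u
  set c₂ := d (u * u) * (u * u) - u * u * d (u * u)
  have h4cu : ∀ r : R, ((c * u + c * u) + (c * u + c * u)) * r =
      r * ((c * u + c * u) + (c * u + c * u)) := by
    intro r
    have h := hc₃ r
    rw [deriv_comm_add_mul_self hdadd hdmul, ← hc u] at h
    rw [add_mul, add_mul c, mul_add, mul_add r c, hc r, hc₂ r] at h
    exact add_left_cancel h
  have hcu := mul_comm_of_add_self_mul_comm htor (mul_comm_of_add_self_mul_comm htor h4cu)
  have hc_lie : c * (u * d u - d u * u) = 0 := by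
    calc c * (u * d u - d u * u) = c * u * d u - c * d u * u := by noncomm_ring
      _ = d u * (c * u) - d u * c * u := by rw [hcu (d u), hc (d u)]
      _ = 0 := by rw [mul_assoc, sub_self]
  rwa [← neg_sub, mul_neg, neg_eq_zero] at hc_lie

variable {σ : R → R}

theorem sigma_mul_comm_of_mul_comm (hσmul : ∀ x y : R, σ (x * y) = σ y * σ x)
    (hσinv : ∀ x : R, σ (σ x) = x) {c : R} (hc : ∀ r : R, c * r = r * c) (r : R) :
    σ c * r = r * σ c := by
  rw [← hσinv r, ← hσmul, ← hc, hσmul]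

theorem IsSigmaPrime.eq_zero_of_mul_self_of_mul_sigma (hsp : IsSigmaPrime σ) {c : R}
    (hc : ∀ r : R, c * r = r * c) (hcc : c * c = 0) (hcσ : c * σ c = 0) : c = 0 :=
  (hsp c c (fun r => by rw [hc, mul_assoc, hcc, mul_zero])
    (fun r => by rw [hc, mul_assoc, hcσ, mul_zero])).elim id id

theorem IsSigmaPrime.eq_zero_of_mul_self_eq_zero (hsp : IsSigmaPrime σ)
    (hσmul : ∀ x y : R, σ (x * y) = σ y * σ x) (hσinv : ∀ x : R, σ (σ x) = x) {c : R}
    (hc : ∀ r : R, c * r = r * c) (hcc : c * c = 0) : c = 0 := by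
  have hσc := sigma_mul_comm_of_mul_comm hσmul hσinv hc
  have ht : ∀ r : R, c * σ c * r = r * (c * σ c) := fun r => by
    rw [mul_assoc, hσc, ← mul_assoc, hc, mul_assoc]
  have htt : c * σ c * (c * σ c) = 0 := by
    calc c * σ c * (c * σ c) = c * (σ c * c) * σ c := by noncomm_ring
      _ = c * c * (σ c * σ c) := by rw [hσc c]; noncomm_ring
      _ = 0 := by rw [hcc, zero_mul]
  have hσt : σ (c * σ c) = c * σ c := by rw [hσmul, hσinv]
  have ht0 : c * σ c = 0 := hsp.eq_zero_of_mul_self_of_mul_sigma ht htt (by rwa [hσt])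
  exact hsp.eq_zero_of_mul_self_of_mul_sigma hc hcc ht0

end

theorem stmt16_general (R : Type*) [Ring R]
  (σ : R → R)
  (hσmul : ∀ x y : R, σ (x * y) = σ y * σ x)
  (hσinv : ∀ x : R, σ (σ x) = x)
  (htor : ∀ x : R, x + x = 0 → x = 0)
  (hsp : ∀ a b : R, (∀ r : R, a * r * b = 0) → (∀ r : R, a * r * σ b = 0) → a = 0 ∨ b = 0)
  (U : AddSubgroup R)
  (hsq : ∀ u ∈ U, u * u ∈ U)
  (d : R → R)
  (hdadd : ∀ x y : R, d (x + y) = d x + d y)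
  (hdmul : ∀ x y : R, d (x * y) = d x * y + x * d y)
  (hcent : ∀ u ∈ U, ∀ r : R, (d u * u - u * d u) * r = r * (d u * u - u * d u)) :
    ∀ u ∈ U, d u * u - u * d u = 0 := by
  intro u hu
  have hsq_zero := deriv_comm_mul_self_eq_zero hdadd hdmul htor (hcent u hu)
    (hcent _ (hsq u hu)) (hcent _ (U.add_mem hu (hsq u hu)))
  exact IsSigmaPrime.eq_zero_of_mul_self_eq_zero hsp hσmul hσinv (hcent u hu) hsq_zero

theorem stmt16 (R : Type*) [Ring R]
  (σ : R → R)
  (hσadd : ∀ x y : R, σ (x + y) = σ x + σ y)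
  (hσmul : ∀ x y : R, σ (x * y) = σ y * σ x)
  (hσinv : ∀ x : R, σ (σ x) = x)
  (htor : ∀ x : R, x + x = 0 → x = 0)
  (hsp : ∀ a b : R, (∀ r : R, a * r * b = 0) → (∀ r : R, a * r * σ b = 0) → a = 0 ∨ b = 0)
  (U : AddSubgroup R)
  (hLie : ∀ u ∈ U, ∀ r : R, u * r - r * u ∈ U)
  (hσU : ∀ u ∈ U, σ u ∈ U)
  (hsq : ∀ u ∈ U, u * u ∈ U)
  (hUnc : ¬ (∀ u ∈ U, ∀ r : R, u * r = r * u))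
  (d : R → R)
  (hdadd : ∀ x y : R, d (x + y) = d x + d y)
  (hdmul : ∀ x y : R, d (x * y) = d x * y + x * d y)
  (hcent : ∀ u ∈ U, ∀ r : R, (d u * u - u * d u) * r = r * (d u * u - u * d u)) :
    ∀ u ∈ U, d u * u - u * d u = 0 :=
  stmt16_general R σ hσmul hσinv htor hsp U hsq d hdadd hdmul hcent
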